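/- arXiv:1305.2116 — 2 statements merged into one kernel-verified Lean document; each statement's English description precedes it below -/
import Mathlib

section
/- For all integers m ≥ 0 and n ≥ 0, the number of elements of Q_3(m,n) equals the number of elements of P_3(−m,n). -/
noncomputable section

/-- The i-th largest part (1-indexed) of a partition, represented as a
multiset of parts; `0` if `i` exceeds the number of parts. -/
def partAt (mu : Multiset ℕ) (i : ℕ) : ℕ :=
  (mu.sort (· ≥ ·)).getD (i - 1) 0

/-- The smallest part of a partition, with the convention that the smallest
part of the empty partition is `+∞`. -/
def sMin (mu : Multiset ℕ) : ℕ∞ := (mu.map ((↑) : ℕ → ℕ∞)).inf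

/-- Q₃(m,n): triples (j, α, β) with j ≥ 1, parts of α at most m+j, parts of
β at most j, |α|+|β|+j(m+j) = n, β₁ = j, ℓ(β) ≥ ℓ(α)+1, α₁ = m+j and
s(β) = 1. -/
def Q3 (m n : ℕ) : Set (ℕ × Multiset ℕ × Multiset ℕ) :=
  {x | 1 ≤ x.1 ∧ (∀ a ∈ x.2.1, 0 < a) ∧ (∀ a ∈ x.2.2, 0 < a) ∧
       (∀ a ∈ x.2.1, a ≤ m + x.1) ∧ (∀ a ∈ x.2.2, a ≤ x.1) ∧
       x.2.1.sum + x.2.2.sum + x.1 * (m + x.1) = n ∧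
       partAt x.2.2 1 = x.1 ∧ Multiset.card x.2.1 + 1 ≤ Multiset.card x.2.2 ∧
       partAt x.2.1 1 = m + x.1 ∧ sMin x.2.2 = 1}

/-- P₃(-m,n): triples (j', γ, δ) with j' ≥ 2, parts of γ at most m+j', parts
of δ at most j', |γ|+|δ|+j'(m+j') = n, ℓ(δ) ≤ ℓ(γ) and δ₁ ≤ j'-2. -/
def P3 (m n : ℕ) : Set (ℕ × Multiset ℕ × Multiset ℕ) :=
  {x | 2 ≤ x.1 ∧ (∀ a ∈ x.2.1, 0 < a) ∧ (∀ a ∈ x.2.2, 0 < a) ∧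
       (∀ a ∈ x.2.1, a ≤ m + x.1) ∧ (∀ a ∈ x.2.2, a ≤ x.1) ∧
       x.2.1.sum + x.2.2.sum + x.1 * (m + x.1) = n ∧
       Multiset.card x.2.2 ≤ Multiset.card x.2.1 ∧
       (partAt x.2.2 1 : ℤ) ≤ (x.1 : ℤ) - 2}

/-!
Write `α = (m + j) ∪ A` and `β = j ∪ 1 ∪ B`; the conditions on `α₁`, `β₁` and `s(β)` say exactly
that this is possible. Since `j(m + j) + (m + j) + j + 1 = (j + 1)(m + j + 1)`, `Q₃(m,n)` is then
parametrised by `j ≥ 1` and partitions `A` with parts `≤ m + j`, `B` with parts `≤ j`, such that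
`ℓ(A) ≤ ℓ(B)` and `|A| + |B| + (j + 1)(m + j + 1) = n`. Moving the first column of `B`, of height
`ℓ(B) ≥ ℓ(A)`, onto `A` gives a partition `γ` with `ℓ(γ) = ℓ(B)` and parts `≤ m + j + 1`, and
leaves a partition `δ` with `ℓ(δ) ≤ ℓ(B)` and parts `< j`: exactly an element `(j + 1, γ, δ)` of
`P₃(-m,n)`. The inverse moves the first column of `γ` back onto `δ`.
-/

namespace Multiset

variable {α : Type*} [LinearOrder α]

theorem sup_mem_of_ne_zero [OrderBot α] {s : Multiset α} (hs : s ≠ 0) : s.sup ∈ s := by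
  induction s using Multiset.induction with
  | empty => contradiction
  | cons a s ih =>
    rw [sup_cons]
    rcases eq_or_ne s 0 with rfl | hs'
    · simp
    · rcases max_choice a s.sup with h | h <;> simp [h, ih hs']

theorem inf_mem_of_ne_zero [OrderTop α] {s : Multiset α} (hs : s ≠ 0) : s.inf ∈ s :=
  sup_mem_of_ne_zero (α := αᵒᵈ) hs

end Multiset

open Multiset

theorem partAt_one_eq_sup (μ : Multiset ℕ) : partAt μ 1 = μ.sup := by
  have hsorted := pairwise_sort μ (· ≥ ·)
  conv_rhs => rw [← sort_eq μ (· ≥ ·)]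
  unfold partAt
  generalize μ.sort (· ≥ ·) = l at hsorted ⊢
  rcases l with _ | ⟨b, t⟩
  · rfl
  · rw [← cons_coe, sup_cons, List.getD_cons_zero]
    refine (sup_eq_left.mpr (sup_le.mpr fun a ha => ?_)).symm
    exact List.rel_of_pairwise_cons hsorted ha

theorem one_mem_of_sMin_eq_one {μ : Multiset ℕ} (h : sMin μ = 1) : 1 ∈ μ := by
  have hne : μ.map ((↑) : ℕ → ℕ∞) ≠ 0 := by
    rintro h0
    simp [sMin, h0] at h
  obtain ⟨a, ha, hal⟩ := mem_map.mp (inf_mem_of_ne_zero hne)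
  rw [← sMin, h, Nat.cast_eq_one] at hal
  exact hal ▸ ha

theorem sMin_eq_one {μ : Multiset ℕ} (h1 : 1 ∈ μ) (hpos : ∀ a ∈ μ, 0 < a) : sMin μ = 1 :=
  le_antisymm (inf_le (mem_map_of_mem _ h1)) <| Multiset.le_inf.mpr fun b hb => by
    obtain ⟨a, ha, rfl⟩ := mem_map.mp hb
    exact_mod_cast hpos a ha

def dropColumn (μ : Multiset ℕ) : Multiset ℕ := (μ.map (· - 1)).filter (· ≠ 0)

/-- For `k < ℓ(μ)` the truncated subtraction makes the new first column of height `ℓ(μ)`,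
not `k`. -/
def addColumn (μ : Multiset ℕ) (k : ℕ) : Multiset ℕ := μ.map (· + 1) + replicate (k - card μ) 1

theorem dropColumn_cons (a : ℕ) (μ : Multiset ℕ) :
    dropColumn (a ::ₘ μ) = if a ≤ 1 then dropColumn μ else (a - 1) ::ₘ dropColumn μ := by
  unfold dropColumn
  rw [map_cons]
  split_ifs with ha
  · exact filter_cons_of_neg _ (by omega)
  · exact filter_cons_of_pos _ (by omega)

theorem card_dropColumn_le (μ : Multiset ℕ) : card (dropColumn μ) ≤ card μ :=
  (card_le_card (filter_le _ _)).trans (card_map _ _).le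

theorem forall_mem_dropColumn {μ : Multiset ℕ} {c : ℕ} (h : ∀ a ∈ μ, a ≤ c) :
    ∀ a ∈ dropColumn μ, 0 < a ∧ a < c := by
  intro a ha
  obtain ⟨ha, ha0⟩ := mem_filter.mp ha
  obtain ⟨b, hb, rfl⟩ := mem_map.mp ha
  have := h b hb
  omega

theorem sum_dropColumn_add_card {μ : Multiset ℕ} (hpos : ∀ a ∈ μ, 0 < a) :
    (dropColumn μ).sum + card μ = μ.sum := by
  induction μ using Multiset.induction with
  | empty => rfl
  | cons a μ ih =>
    have ha := hpos a (mem_cons_self a μ)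
    have ih := ih fun b hb => hpos b (mem_cons_of_mem hb)
    rw [dropColumn_cons]
    split_ifs <;> simp only [sum_cons, card_cons] <;> omega

theorem addColumn_dropColumn {μ : Multiset ℕ} (hpos : ∀ a ∈ μ, 0 < a) :
    addColumn (dropColumn μ) (card μ) = μ := by
  induction μ using Multiset.induction with
  | empty => rfl
  | cons a μ ih =>
    have ha := hpos a (mem_cons_self a μ)
    have ih := ih fun b hb => hpos b (mem_cons_of_mem hb)
    have hle := card_dropColumn_le μ
    unfold addColumn at ih ⊢
    rw [dropColumn_cons]
    split_ifs with ha1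
    · obtain rfl : a = 1 := by omega
      rw [card_cons, Nat.sub_add_comm hle, replicate_succ, add_cons, ih]
    · rw [map_cons, card_cons, card_cons, Nat.add_sub_add_right, cons_add, ih,
        Nat.sub_add_cancel ha]

theorem dropColumn_addColumn {μ : Multiset ℕ} (hpos : ∀ a ∈ μ, 0 < a) (k : ℕ) :
    dropColumn (addColumn μ k) = μ := by
  unfold dropColumn addColumn
  rw [map_add, map_map, map_replicate, filter_add]
  simpa [filter_eq_self.mpr fun a ha => (hpos a ha).ne'] using fun _ => eq_of_mem_replicate

theorem card_addColumn {μ : Multiset ℕ} {k : ℕ} (hk : card μ ≤ k) : card (addColumn μ k) = k := by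
  simp only [addColumn, card_add, card_map, card_replicate]
  omega

theorem sum_addColumn {μ : Multiset ℕ} {k : ℕ} (hk : card μ ≤ k) :
    (addColumn μ k).sum = μ.sum + k := by
  simp only [addColumn, sum_add, sum_map_add, map_id', map_const',
    sum_replicate, smul_eq_mul]
  omega

theorem forall_mem_addColumn {μ : Multiset ℕ} {c : ℕ} (hc : ∀ a ∈ μ, a ≤ c) (k : ℕ) :
    ∀ a ∈ addColumn μ k, 0 < a ∧ a ≤ c + 1 := by
  intro a ha
  rcases mem_add.mp ha with ha | ha
  · obtain ⟨b, hb, rfl⟩ := mem_map.mp ha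
    exact ⟨b.succ_pos, Nat.succ_le_succ (hc b hb)⟩
  · rw [eq_of_mem_replicate ha]
    omega

theorem mem_Q3_cons_iff {m n j : ℕ} {A B : Multiset ℕ} :
    (j, (m + j) ::ₘ A, j ::ₘ 1 ::ₘ B) ∈ Q3 m n ↔
      1 ≤ j ∧ (∀ a ∈ A, 0 < a ∧ a ≤ m + j) ∧ (∀ b ∈ B, 0 < b ∧ b ≤ j) ∧
        card A ≤ card B ∧ A.sum + B.sum + (j + 1) * (m + j + 1) = n := by
  have hweight : (j + 1) * (m + j + 1) = j * (m + j) + (m + j) + (j + 1) := by ring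
  simp only [Q3, Set.mem_ofPred_eq, partAt_one_eq_sup, forall_mem_cons, sup_cons, sum_cons,
    card_cons, sup_eq_left, sup_le_iff, Multiset.sup_le, forall_and]
  constructor
  · rintro ⟨hj, ⟨-, hApos⟩, ⟨-, -, hBpos⟩, ⟨-, hAle⟩, ⟨-, -, hBle⟩, hsum, -, hcard, -, -⟩
    exact ⟨hj, ⟨hApos, hAle⟩, ⟨hBpos, hBle⟩, by omega, by omega⟩
  · rintro ⟨hj, ⟨hApos, hAle⟩, ⟨hBpos, hBle⟩, hcard, hsum⟩
    refine ⟨hj, ⟨by omega, hApos⟩, ⟨by omega, by omega, hBpos⟩, ⟨le_rfl, hAle⟩,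
      ⟨le_rfl, hj, hBle⟩, by omega, ⟨hj, hBle⟩, by omega, hAle, ?_⟩
    exact sMin_eq_one (mem_cons_of_mem (mem_cons_self 1 B))
      (forall_mem_cons.mpr ⟨by omega, forall_mem_cons.mpr ⟨one_pos, hBpos⟩⟩)

theorem exists_cons_of_mem_Q3 {m n j : ℕ} {α β : Multiset ℕ} (hx : (j, α, β) ∈ Q3 m n) :
    ∃ A B, α = (m + j) ::ₘ A ∧ β = j ::ₘ 1 ::ₘ B := by
  obtain ⟨hj, -, hβpos, -, hβle, -, hβ1, hcard, hα1, hmin⟩ := hx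
  dsimp only at hβpos hβle hβ1 hcard hα1 hmin
  rw [partAt_one_eq_sup] at hα1 hβ1
  have hα : m + j ∈ α := by
    have hne : α ≠ 0 := by rintro rfl; simp at hα1; omega
    exact hα1 ▸ sup_mem_of_ne_zero hne
  have hβ : j ∈ β := hβ1 ▸ sup_mem_of_ne_zero (by rintro rfl; simp at hβ1; omega)
  have h1 : 1 ∈ β.erase j := by
    rcases eq_or_ne j 1 with rfl | hj1
    · -- `β` consists of ones, at least two of them since `ℓ(β) > ℓ(α) ≥ 1`
      have hrep : β = replicate (card β) 1 :=
        eq_replicate_card.mpr fun b hb => le_antisymm (hβle b hb) (hβpos b hb)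
      obtain ⟨k, hk⟩ : ∃ k, card β = k + 2 :=
        ⟨card β - 2, by have := card_pos_iff_exists_mem.mpr ⟨_, hα⟩; omega⟩
      rw [hrep, hk, replicate_succ, erase_cons_head, replicate_succ]
      exact mem_cons_self 1 _
    · exact (mem_erase_of_ne (Ne.symm hj1)).mpr (one_mem_of_sMin_eq_one hmin)
  exact ⟨_, _, (cons_erase hα).symm, by rw [cons_erase h1, cons_erase hβ]⟩

theorem mem_P3_succ_iff {m n j : ℕ} {γ δ : Multiset ℕ} :
    (j + 1, γ, δ) ∈ P3 m n ↔
      1 ≤ j ∧ (∀ c ∈ γ, 0 < c ∧ c ≤ m + j + 1) ∧ (∀ d ∈ δ, 0 < d ∧ d < j) ∧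
        card δ ≤ card γ ∧ γ.sum + δ.sum + (j + 1) * (m + j + 1) = n := by
  have hδ1 : (partAt δ 1 : ℤ) ≤ ((j + 1 : ℕ) : ℤ) - 2 ↔ 1 ≤ j ∧ ∀ d ∈ δ, d < j := by
    rw [partAt_one_eq_sup]
    constructor
    · intro h
      exact ⟨by omega, fun d hd => by have := le_sup hd; omega⟩
    · rintro ⟨hj, hδ⟩
      have : δ.sup ≤ j - 1 := Multiset.sup_le.mpr fun d hd => by have := hδ d hd; omega
      omega
  simp only [P3, Set.mem_ofPred_eq, hδ1, forall_and, ← add_assoc]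
  constructor
  · rintro ⟨-, hγpos, hδpos, hγle, -, hsum, hcard, hj, hδlt⟩
    exact ⟨hj, ⟨hγpos, hγle⟩, ⟨hδpos, hδlt⟩, hcard, hsum⟩
  · rintro ⟨hj, ⟨hγpos, hγle⟩, ⟨hδpos, hδlt⟩, hcard, hsum⟩
    exact ⟨by omega, hγpos, hδpos, hγle, fun d hd => by have := hδlt d hd; omega, hsum, hcard,
      hj, hδlt⟩

theorem exists_eq_succ_of_mem_P3 {m n j' : ℕ} {γ δ : Multiset ℕ} (hx : (j', γ, δ) ∈ P3 m n) :
    ∃ j, j' = j + 1 :=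
  ⟨j' - 1, by have := hx.1; dsimp only at this; omega⟩

def toP3 (m : ℕ) (x : ℕ × Multiset ℕ × Multiset ℕ) : ℕ × Multiset ℕ × Multiset ℕ :=
  (x.1 + 1, addColumn (x.2.1.erase (m + x.1)) (card x.2.2 - 2),
    dropColumn ((x.2.2.erase x.1).erase 1))

def toQ3 (m : ℕ) (x : ℕ × Multiset ℕ × Multiset ℕ) : ℕ × Multiset ℕ × Multiset ℕ :=
  (x.1 - 1, (m + (x.1 - 1)) ::ₘ dropColumn x.2.1,
    (x.1 - 1) ::ₘ 1 ::ₘ addColumn x.2.2 (card x.2.1))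

theorem toP3_cons (m j : ℕ) (A B : Multiset ℕ) :
    toP3 m (j, (m + j) ::ₘ A, j ::ₘ 1 ::ₘ B) = (j + 1, addColumn A (card B), dropColumn B) := by
  simp [toP3]

theorem toQ3_succ (m j : ℕ) (γ δ : Multiset ℕ) :
    toQ3 m (j + 1, γ, δ) = (j, (m + j) ::ₘ dropColumn γ, j ::ₘ 1 ::ₘ addColumn δ (card γ)) :=
  rfl

theorem mapsTo_toP3 (m n : ℕ) : Set.MapsTo (toP3 m) (Q3 m n) (P3 m n) := by
  rintro ⟨j, α, β⟩ hx
  obtain ⟨A, B, rfl, rfl⟩ := exists_cons_of_mem_Q3 hx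
  obtain ⟨hj, hA, hB, hcard, hsum⟩ := mem_Q3_cons_iff.mp hx
  rw [toP3_cons, mem_P3_succ_iff, card_addColumn hcard, sum_addColumn hcard]
  have hBsum := sum_dropColumn_add_card fun b hb => (hB b hb).1
  exact ⟨hj, forall_mem_addColumn (fun a ha => (hA a ha).2) _,
    forall_mem_dropColumn fun b hb => (hB b hb).2, card_dropColumn_le B, by omega⟩

theorem mapsTo_toQ3 (m n : ℕ) : Set.MapsTo (toQ3 m) (P3 m n) (Q3 m n) := by
  rintro ⟨j', γ, δ⟩ hx
  obtain ⟨j, rfl⟩ := exists_eq_succ_of_mem_P3 hx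
  obtain ⟨hj, hγ, hδ, hcard, hsum⟩ := mem_P3_succ_iff.mp hx
  rw [toQ3_succ, mem_Q3_cons_iff, card_addColumn hcard, sum_addColumn hcard]
  have hγsum := sum_dropColumn_add_card fun c hc => (hγ c hc).1
  refine ⟨hj, fun a ha => ?_, fun b hb => ?_, card_dropColumn_le γ, by omega⟩
  · have := forall_mem_dropColumn (fun c hc => (hγ c hc).2) a ha
    omega
  · have := forall_mem_addColumn (c := j - 1) (fun d hd => by have := hδ d hd; omega) _ b hb
    omega

theorem invOn_toQ3_toP3 (m n : ℕ) : Set.InvOn (toQ3 m) (toP3 m) (Q3 m n) (P3 m n) := by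
  constructor
  · rintro ⟨j, α, β⟩ hx
    obtain ⟨A, B, rfl, rfl⟩ := exists_cons_of_mem_Q3 hx
    obtain ⟨-, hA, hB, hcard, -⟩ := mem_Q3_cons_iff.mp hx
    rw [toP3_cons, toQ3_succ, dropColumn_addColumn (fun a ha => (hA a ha).1),
      card_addColumn hcard, addColumn_dropColumn (fun b hb => (hB b hb).1)]
  · rintro ⟨j', γ, δ⟩ hx
    obtain ⟨j, rfl⟩ := exists_eq_succ_of_mem_P3 hx
    obtain ⟨-, hγ, hδ, hcard, -⟩ := mem_P3_succ_iff.mp hx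
    rw [toQ3_succ, toP3_cons, card_addColumn hcard,
      addColumn_dropColumn (fun c hc => (hγ c hc).1),
      dropColumn_addColumn (fun d hd => (hδ d hd).1)]

/-- For all integers m ≥ 0 and n ≥ 0, #Q₃(m,n) = #P₃(-m,n). -/
theorem Q3_card_eq_P3_card (m n : ℕ) : Nat.card (Q3 m n) = Nat.card (P3 m n) :=
  Nat.card_congr ((invOn_toQ3_toP3 m n).bijOn (mapsTo_toP3 m n) (mapsTo_toQ3 m n)).equiv
end
end

section
/- For all integers m ≥ 0 and n ≥ 0, the number of elements of Q_4(m,n) is at most the number of elements of P_4(−m,n). -/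
noncomputable section

/-- Q₄(m,n): triples (j, α, β) with j ≥ 1, parts of α at most m+j, parts of
β at most j, |α|+|β|+j(m+j) = n, β₁ = j, ℓ(β) ≥ ℓ(α)+1, α₁ = m+j > α₂ and
s(β) ≥ 2. -/
def Q4 (m n : ℕ) : Set (ℕ × Multiset ℕ × Multiset ℕ) :=
  {x | 1 ≤ x.1 ∧ (∀ a ∈ x.2.1, 0 < a) ∧ (∀ a ∈ x.2.2, 0 < a) ∧
       (∀ a ∈ x.2.1, a ≤ m + x.1) ∧ (∀ a ∈ x.2.2, a ≤ x.1) ∧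
       x.2.1.sum + x.2.2.sum + x.1 * (m + x.1) = n ∧
       partAt x.2.2 1 = x.1 ∧ Multiset.card x.2.1 + 1 ≤ Multiset.card x.2.2 ∧
       partAt x.2.1 1 = m + x.1 ∧ partAt x.2.1 2 < m + x.1 ∧ 2 ≤ sMin x.2.2}

/-- P₄(-m,n): triples (j', γ, δ) with j' ≥ 1, parts of γ at most m+j', parts
of δ at most j', |γ|+|δ|+j'(m+j') = n, ℓ(γ) = ℓ(δ), γ₁ = m+j'-1, δ₁ = j'
and δ has a part equal to 2. -/
def P4 (m n : ℕ) : Set (ℕ × Multiset ℕ × Multiset ℕ) :=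
  {x | 1 ≤ x.1 ∧ (∀ a ∈ x.2.1, 0 < a) ∧ (∀ a ∈ x.2.2, 0 < a) ∧
       (∀ a ∈ x.2.1, a ≤ m + x.1) ∧ (∀ a ∈ x.2.2, a ≤ x.1) ∧
       x.2.1.sum + x.2.2.sum + x.1 * (m + x.1) = n ∧
       Multiset.card x.2.1 = Multiset.card x.2.2 ∧
       (partAt x.2.1 1 : ℤ) = (m : ℤ) + (x.1 : ℤ) - 1 ∧
       partAt x.2.2 1 = x.1 ∧ 2 ∈ x.2.2}

/-!
Write `(j, α, β) ∈ Q₄(m, n)` as `α = (m + j, a₁, a₂, …)` and `β = (j, e₁ + 2, e₂ + 2, …)`,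
and put `e₀ = j - 2`. Let `t` be the first index with `a_{t+1} ≤ e_t + 1`. Before `t` the
sequence `a` stays at least two above `e`, so lowering it by one and raising `e` by one, and
exchanging the two sequences after `t`,
  `φ_i = a_i - 1, ψ_i = e_i + 1` for `i ≤ t`,   `φ_i = e_i, ψ_i = a_i` for `i > t`,
gives two weakly decreasing sequences with `φ_i + ψ_i = a_i + e_i`. With `v = ℓ(β) - 2`,
`γ = (m + j - 1, φ₁ + 1, …, φ_{v+1} + 1)` and `δ = (j, 2, ψ₁ + 1, …, ψ_v + 1)` give an element
`(j, γ, δ)` of `P₄(-m, n)`. The map is injective because `t` is also the first index with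
`φ_{t+1} < ψ_t`, so `(a, e)` can be read off from `(φ, ψ)`.
-/

section PartAt

variable {μ ν : Multiset ℕ} {i k : ℕ}

theorem partAt_succ (μ : Multiset ℕ) (i : ℕ) :
    partAt μ (i + 1) = (μ.sort (· ≥ ·)).getD i 0 := rfl

theorem partAt_eq_zero (h : Multiset.card μ < i) : partAt μ i = 0 :=
  List.getD_eq_default _ _ (by rw [Multiset.length_sort]; omega)

theorem partAt_mem (h₁ : 1 ≤ i) (h₂ : i ≤ Multiset.card μ) : partAt μ i ∈ μ := by
  have hi : i - 1 < (μ.sort (· ≥ ·)).length := by rw [Multiset.length_sort]; omega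
  rw [partAt, List.getD_eq_getElem _ _ hi, ← Multiset.mem_sort (· ≥ ·)]
  exact List.getElem_mem hi

-- `partAt μ 0 = partAt μ 1`, since `0 - 1 = 0` in `ℕ`.
theorem antitone_partAt (μ : Multiset ℕ) : Antitone (partAt μ) := by
  intro i k hik
  by_cases hk : k - 1 < (μ.sort (· ≥ ·)).length
  · rw [partAt, partAt, List.getD_eq_getElem _ _ hk, List.getD_eq_getElem _ _ (by omega)]
    exact (μ.pairwise_sort (· ≥ ·)).rel_get_of_le (a := ⟨i - 1, by omega⟩) (b := ⟨k - 1, hk⟩)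
      (by simp only [Fin.mk_le_mk]; omega)
  · rw [partAt, List.getD_eq_default _ _ (by omega)]
    exact Nat.zero_le _

theorem le_partAt_one {y : ℕ} (hy : y ∈ μ) : y ≤ partAt μ 1 := by
  rw [← Multiset.mem_sort (· ≥ ·), List.mem_iff_getElem] at hy
  obtain ⟨k, hk, rfl⟩ := hy
  have := antitone_partAt μ (Nat.le_add_left 1 k)
  rwa [partAt_succ, List.getD_eq_getElem _ _ hk] at this

theorem partAt_one_eq {c : ℕ} (hc : c ∈ μ) (hle : ∀ y ∈ μ, y ≤ c) : partAt μ 1 = c :=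
  (hle _ (partAt_mem le_rfl (Multiset.card_pos_iff_exists_mem.2 ⟨c, hc⟩))).antisymm
    (le_partAt_one hc)

theorem partAt_map_range {f : ℕ → ℕ} (hf : Antitone f) (hi : i < k) :
    partAt ((Multiset.range k).map f) (i + 1) = f i := by
  have hsort : ((Multiset.range k).map f).sort (· ≥ ·) = (List.range k).map f := by
    rw [Multiset.range, Multiset.map_coe, Multiset.coe_sort]
    exact List.mergeSort_eq_self _ (List.pairwise_map.2 <| List.pairwise_lt_range.imp
      fun h => by simpa using hf h.le)
  simp [partAt_succ, hsort, hi]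

theorem apply_eq_of_map_range_eq {f g : ℕ → ℕ} (hf : Antitone f) (hg : Antitone g)
    (h : (Multiset.range k).map f = (Multiset.range k).map g) (hi : i < k) : f i = g i := by
  rw [← partAt_map_range hf hi, h, partAt_map_range hg hi]

theorem map_range_partAt (μ : Multiset ℕ) :
    (Multiset.range (Multiset.card μ)).map (fun i => partAt μ (i + 1)) = μ := by
  have hsort : (List.range (Multiset.card μ)).map (fun i => partAt μ (i + 1)) =
      μ.sort (· ≥ ·) :=
    List.ext_getElem (by simp) fun i _ h => by
      rw [List.getElem_map, List.getElem_range, partAt_succ, List.getD_eq_getElem]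
  rw [Multiset.range, Multiset.map_coe, hsort, Multiset.sort_eq]

theorem sum_partAt (hk : Multiset.card μ ≤ k) :
    ∑ i ∈ Finset.range k, partAt μ (i + 1) = μ.sum := calc
  _ = ∑ i ∈ Finset.range (Multiset.card μ), partAt μ (i + 1) :=
    (Finset.sum_subset (Finset.range_subset_range.2 hk) fun i _ hi =>
      partAt_eq_zero (by simp only [Finset.mem_range] at hi; omega)).symm
  _ = μ.sum := by rw [Finset.sum_eq_multiset_sum, Finset.range_val, map_range_partAt]

theorem eq_of_partAt_eq (hμ : ∀ a ∈ μ, 0 < a) (hν : ∀ a ∈ ν, 0 < a)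
    (h : ∀ i, partAt μ (i + 1) = partAt ν (i + 1)) : μ = ν := by
  rw [← Multiset.sort_eq μ (· ≥ ·), ← Multiset.sort_eq ν (· ≥ ·)]
  congr 1
  refine List.ext_getElem? fun i => ?_
  have hi := h i
  rw [partAt_succ, partAt_succ, List.getD_eq_getElem?_getD, List.getD_eq_getElem?_getD] at hi
  have hpos : ∀ {κ : Multiset ℕ}, (∀ a ∈ κ, 0 < a) → ∀ {a}, (κ.sort (· ≥ ·))[i]? = some a → 0 < a :=
    fun hκ _ ha => hκ _ ((Multiset.mem_sort _).1 (List.mem_of_getElem? ha))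
  cases hμi : (μ.sort (· ≥ ·))[i]? <;> cases hνi : (ν.sort (· ≥ ·))[i]? <;>
    simp only [hμi, hνi, Option.getD_none, Option.getD_some] at hi
  · rfl
  · exact absurd hi (hpos hν hνi).ne
  · exact absurd hi (hpos hμ hμi).ne'
  · rw [hi]

theorem eq_of_partAt_eq_of_card_le (hμ : ∀ a ∈ μ, 0 < a) (hν : ∀ a ∈ ν, 0 < a)
    (hμk : Multiset.card μ ≤ k) (hνk : Multiset.card ν ≤ k)
    (h : ∀ i < k, partAt μ (i + 1) = partAt ν (i + 1)) : μ = ν :=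
  eq_of_partAt_eq hμ hν fun i => (lt_or_ge i k).elim (h i) fun hi => by
    rw [partAt_eq_zero (by omega), partAt_eq_zero (by omega)]

theorem coe_le_sMin_iff {c : ℕ} : (c : ℕ∞) ≤ sMin μ ↔ ∀ y ∈ μ, c ≤ y := by
  simp [sMin]

end PartAt

section Crossing

variable (a e : ℕ → ℕ)

-- `t`, `φ` and `ψ` of the header. As `sInf ∅ = 0`, the lemmas below assume `a (v + 1) ≤ e v + 1`.
def crossing : ℕ := sInf {t | a (t + 1) ≤ e t + 1}

def crossSwapFst (i : ℕ) : ℕ := if i ≤ crossing a e then a i - 1 else e i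

def crossSwapSnd (i : ℕ) : ℕ := if i ≤ crossing a e then e i + 1 else a i

variable {a e} {v i : ℕ}

theorem crossing_le (hv : a (v + 1) ≤ e v + 1) : crossing a e ≤ v := Nat.sInf_le hv

theorem apply_crossing_succ_le (hv : a (v + 1) ≤ e v + 1) :
    a (crossing a e + 1) ≤ e (crossing a e) + 1 :=
  Nat.sInf_mem (s := {t | a (t + 1) ≤ e t + 1}) ⟨v, hv⟩

theorem add_two_le_of_lt_crossing (hi : i < crossing a e) : e i + 2 ≤ a (i + 1) := by
  have : ¬a (i + 1) ≤ e i + 1 := Nat.notMem_of_lt_sInf (s := {t | a (t + 1) ≤ e t + 1}) hi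
  omega

theorem add_two_le_of_le_crossing (h₁ : 1 ≤ i) (h₂ : i ≤ crossing a e) :
    e (i - 1) + 2 ≤ a i := by
  simpa [Nat.sub_add_cancel h₁] using
    add_two_le_of_lt_crossing (a := a) (e := e) (i := i - 1) (by omega)

theorem crossSwapFst_succ_le (ha : Antitone a) (he : Antitone e) (hi : 1 ≤ i) :
    crossSwapFst a e (i + 1) ≤ crossSwapFst a e i := by
  unfold crossSwapFst
  split_ifs with h₁ h₂ h₂
  · exact Nat.sub_le_sub_right (ha i.le_succ) 1
  · omega
  · have := add_two_le_of_le_crossing hi h₂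
    have := he (show i - 1 ≤ i + 1 by omega)
    omega
  · exact he i.le_succ

theorem crossSwapSnd_succ_le (ha : Antitone a) (he : Antitone e) (hv : a (v + 1) ≤ e v + 1) :
    crossSwapSnd a e (i + 1) ≤ crossSwapSnd a e i := by
  unfold crossSwapSnd
  split_ifs with h₁ h₂ h₂
  · exact Nat.add_le_add_right (he i.le_succ) 1
  · omega
  · have := apply_crossing_succ_le hv
    rwa [show i = crossing a e by omega]
  · exact ha i.le_succ

theorem antitone_crossSwapFst_succ (ha : Antitone a) (he : Antitone e) :
    Antitone fun i => crossSwapFst a e (i + 1) :=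
  antitone_nat_of_succ_le fun i => crossSwapFst_succ_le ha he (Nat.le_add_left 1 i)

theorem antitone_crossSwapSnd (ha : Antitone a) (he : Antitone e) (hv : a (v + 1) ≤ e v + 1) :
    Antitone (crossSwapSnd a e) :=
  antitone_nat_of_succ_le fun _ => crossSwapSnd_succ_le ha he hv

theorem crossSwapSnd_zero : crossSwapSnd a e 0 = e 0 + 1 := if_pos (Nat.zero_le _)

theorem crossSwapFst_le {c : ℕ} (ha : ∀ i, 1 ≤ i → a i ≤ c + 1) (he : ∀ i, e i ≤ c) (hi : 1 ≤ i) :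
    crossSwapFst a e i ≤ c := by
  unfold crossSwapFst
  split_ifs
  · have := ha i hi; omega
  · exact he i

theorem crossSwapSnd_le {c : ℕ} (ha : Antitone a) (he : ∀ i, e i ≤ c) (hv : a (v + 1) ≤ e v + 1) :
    crossSwapSnd a e i ≤ c + 1 := by
  unfold crossSwapSnd
  split_ifs with h
  · exact Nat.add_le_add_right (he i) 1
  · have := ha (show crossing a e + 1 ≤ i by omega)
    have := apply_crossing_succ_le hv
    have := he (crossing a e)
    omega

theorem crossSwapFst_add_crossSwapSnd (hi : 1 ≤ i) :
    crossSwapFst a e i + crossSwapSnd a e i = a i + e i := by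
  unfold crossSwapFst crossSwapSnd
  split_ifs with h
  · have := add_two_le_of_le_crossing hi h
    omega
  · omega

theorem sum_crossSwapFst_add_sum_crossSwapSnd (hv : a (v + 1) ≤ e v + 1) :
    ∑ i ∈ Finset.range (v + 1), crossSwapFst a e (i + 1) +
        ∑ i ∈ Finset.range v, crossSwapSnd a e (i + 1) =
      ∑ i ∈ Finset.range v, a (i + 1) + ∑ i ∈ Finset.range (v + 1), e (i + 1) := by
  have hlast : crossSwapFst a e (v + 1) = e (v + 1) := if_neg (by have := crossing_le hv; omega)
  have hpair := Finset.sum_congr (s₁ := Finset.range v) rfl fun i _ =>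
    crossSwapFst_add_crossSwapSnd (a := a) (e := e) (Nat.le_add_left 1 i)
  rw [Finset.sum_add_distrib, Finset.sum_add_distrib] at hpair
  rw [Finset.sum_range_succ, Finset.sum_range_succ (fun i => e (i + 1)), hlast]
  omega

theorem crossSwapSnd_le_crossSwapFst_succ (hi : i < crossing a e) :
    crossSwapSnd a e i ≤ crossSwapFst a e (i + 1) := by
  have := add_two_le_of_lt_crossing hi
  unfold crossSwapFst crossSwapSnd
  rw [if_pos hi.le, if_pos (Nat.succ_le_of_lt hi)]
  omega

theorem crossSwapFst_succ_crossing_lt (he : Antitone e) :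
    crossSwapFst a e (crossing a e + 1) < crossSwapSnd a e (crossing a e) := by
  unfold crossSwapFst crossSwapSnd
  rw [if_neg (by omega), if_pos le_rfl]
  exact Nat.lt_succ_of_le (he (Nat.le_succ _))

variable {a' e' : ℕ → ℕ}

theorem crossing_le_of_crossSwap_eqOn (he : Antitone e) (hv : a (v + 1) ≤ e v + 1)
    (hfst : Set.EqOn (crossSwapFst a e) (crossSwapFst a' e') (Set.Icc 1 (v + 1)))
    (hsnd : Set.EqOn (crossSwapSnd a e) (crossSwapSnd a' e') (Set.Iic v)) :
    crossing a' e' ≤ crossing a e := by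
  by_contra! hlt
  have ht := crossing_le hv
  have := crossSwapSnd_le_crossSwapFst_succ hlt
  rw [← hfst ⟨Nat.le_add_left 1 _, by omega⟩, ← hsnd ht] at this
  exact (crossSwapFst_succ_crossing_lt he).not_ge this

theorem eqOn_of_crossSwap_eqOn (he : Antitone e) (he' : Antitone e') (hv : a (v + 1) ≤ e v + 1)
    (hv' : a' (v + 1) ≤ e' v + 1)
    (hfst : Set.EqOn (crossSwapFst a e) (crossSwapFst a' e') (Set.Icc 1 (v + 1)))
    (hsnd : Set.EqOn (crossSwapSnd a e) (crossSwapSnd a' e') (Set.Iic v)) :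
    Set.EqOn a a' (Set.Icc 1 v) ∧ Set.EqOn e e' (Set.Icc 1 (v + 1)) := by
  have ht : crossing a e = crossing a' e' :=
    (crossing_le_of_crossSwap_eqOn he' hv' hfst.symm hsnd.symm).antisymm
      (crossing_le_of_crossSwap_eqOn he hv hfst hsnd)
  have ht_le := crossing_le hv
  constructor
  · intro i ⟨h₁, h₂⟩
    have hl := hfst ⟨h₁, by omega⟩
    have hh := hsnd (show i ≤ v from h₂)
    unfold crossSwapFst at hl
    unfold crossSwapSnd at hh
    by_cases hi : i ≤ crossing a e
    · have := add_two_le_of_le_crossing h₁ hi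
      have := add_two_le_of_le_crossing h₁ (ht ▸ hi)
      rw [if_pos hi, if_pos (ht ▸ hi)] at hl
      omega
    · rwa [if_neg hi, if_neg (ht ▸ hi)] at hh
  · intro i ⟨h₁, h₂⟩
    have hl := hfst ⟨h₁, h₂⟩
    unfold crossSwapFst at hl
    by_cases hi : i ≤ crossing a e
    · have hh := hsnd (show i ≤ v by omega)
      unfold crossSwapSnd at hh
      rw [if_pos hi, if_pos (ht ▸ hi)] at hh
      omega
    · rwa [if_neg hi, if_neg (ht ▸ hi)] at hl

end Crossing

-- The sequences `a` and `e` of the header, with `a₀ = α₁ = m + j` and `e₀ = β₁ - 2 = j - 2`.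
def alphaSeq (x : ℕ × Multiset ℕ × Multiset ℕ) (i : ℕ) : ℕ := partAt x.2.1 (i + 1)

def betaSeq (x : ℕ × Multiset ℕ × Multiset ℕ) (i : ℕ) : ℕ := partAt x.2.2 (i + 1) - 2

def q4ToP4 (m : ℕ) (x : ℕ × Multiset ℕ × Multiset ℕ) : ℕ × Multiset ℕ × Multiset ℕ :=
  (x.1,
    (m + x.1 - 1) ::ₘ (Multiset.range (Multiset.card x.2.2 - 1)).map
      (fun i => crossSwapFst (alphaSeq x) (betaSeq x) (i + 1) + 1),
    x.1 ::ₘ 2 ::ₘ (Multiset.range (Multiset.card x.2.2 - 2)).map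
      (fun i => crossSwapSnd (alphaSeq x) (betaSeq x) (i + 1) + 1))

theorem q4ToP4_eq {v : ℕ} (m : ℕ) {x : ℕ × Multiset ℕ × Multiset ℕ}
    (hv : Multiset.card x.2.2 = v + 2) :
    q4ToP4 m x = (x.1,
      (m + x.1 - 1) ::ₘ (Multiset.range (v + 1)).map
        (fun i => crossSwapFst (alphaSeq x) (betaSeq x) (i + 1) + 1),
      x.1 ::ₘ 2 ::ₘ (Multiset.range v).map
        (fun i => crossSwapSnd (alphaSeq x) (betaSeq x) (i + 1) + 1)) := by
  rw [q4ToP4, hv]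
  rfl

theorem antitone_alphaSeq (x : ℕ × Multiset ℕ × Multiset ℕ) : Antitone (alphaSeq x) :=
  fun _ _ h => antitone_partAt _ (Nat.succ_le_succ h)

theorem antitone_betaSeq (x : ℕ × Multiset ℕ × Multiset ℕ) : Antitone (betaSeq x) :=
  fun _ _ h => Nat.sub_le_sub_right (antitone_partAt _ (Nat.succ_le_succ h)) 2

namespace Q4

variable {m n i v : ℕ} {x y : ℕ × Multiset ℕ × Multiset ℕ}

theorem two_le_of_mem_beta (hx : x ∈ Q4 m n) {y : ℕ} (hy : y ∈ x.2.2) : 2 ≤ y := by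
  obtain ⟨-, -, -, -, -, -, -, -, -, -, hmin⟩ := hx
  exact coe_le_sMin_iff.1 hmin y hy

theorem two_le_card_beta (hx : x ∈ Q4 m n) : 2 ≤ Multiset.card x.2.2 := by
  obtain ⟨hj, -, -, -, -, -, -, hcard, hα₁, -, -⟩ := hx
  have : Multiset.card x.2.1 ≠ 0 := fun h => by
    rw [partAt_eq_zero (by omega)] at hα₁
    omega
  omega

theorem two_le_fst (hx : x ∈ Q4 m n) : 2 ≤ x.1 := by
  have hmem : partAt x.2.2 1 ∈ x.2.2 :=
    partAt_mem le_rfl (by have := two_le_card_beta hx; omega)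
  obtain ⟨-, -, -, -, -, -, hβ₁, -⟩ := id hx
  exact hβ₁ ▸ two_le_of_mem_beta hx hmem

theorem alphaSeq_le (hx : x ∈ Q4 m n) (hi : 1 ≤ i) : alphaSeq x i ≤ m + x.1 - 1 := by
  obtain ⟨-, -, -, -, -, -, -, -, -, hα₂, -⟩ := hx
  have := antitone_partAt x.2.1 (show 2 ≤ i + 1 by omega)
  unfold alphaSeq
  omega

theorem alphaSeq_succ_le (hx : x ∈ Q4 m n) (hv : Multiset.card x.2.2 = v + 2) :
    alphaSeq x (v + 1) ≤ betaSeq x v + 1 := by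
  obtain ⟨-, -, -, -, -, -, -, hcard, -⟩ := hx
  rw [alphaSeq, partAt_eq_zero (by omega)]
  exact Nat.zero_le _

theorem betaSeq_le (hx : x ∈ Q4 m n) : betaSeq x i ≤ x.1 - 2 := by
  obtain ⟨-, -, -, -, -, -, hβ₁, -⟩ := hx
  have := antitone_partAt x.2.2 (Nat.le_add_left 1 i)
  unfold betaSeq
  omega

theorem betaSeq_add_two (hx : x ∈ Q4 m n) (hi : i < Multiset.card x.2.2) :
    betaSeq x i + 2 = partAt x.2.2 (i + 1) := by
  have := two_le_of_mem_beta hx (partAt_mem (Nat.le_add_left 1 i) hi)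
  unfold betaSeq
  omega

theorem sum_alpha (hx : x ∈ Q4 m n) (hv : Multiset.card x.2.2 = v + 2) :
    x.2.1.sum = m + x.1 + ∑ i ∈ Finset.range v, alphaSeq x (i + 1) := by
  obtain ⟨-, -, -, -, -, -, -, hcard, hα₁, -⟩ := hx
  rw [← sum_partAt (k := v + 1) (by omega), Finset.sum_range_succ', hα₁, add_comm]
  rfl

theorem sum_beta (hx : x ∈ Q4 m n) (hv : Multiset.card x.2.2 = v + 2) :
    x.2.2.sum = x.1 + ∑ i ∈ Finset.range (v + 1), betaSeq x (i + 1) + 2 * (v + 1) := by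
  obtain ⟨-, -, -, -, -, -, hβ₁, -⟩ := id hx
  have hparts : ∀ i ∈ Finset.range (v + 1), partAt x.2.2 (i + 1 + 1) = betaSeq x (i + 1) + 2 :=
    fun i hi => (betaSeq_add_two hx (by have := Finset.mem_range.1 hi; omega)).symm
  rw [← sum_partAt hv.le, Finset.sum_range_succ', hβ₁, Finset.sum_congr rfl hparts,
    Finset.sum_add_distrib, Finset.sum_const, Finset.card_range, smul_eq_mul]
  ring

theorem sum_q4ToP4 (hx : x ∈ Q4 m n) :
    (q4ToP4 m x).2.1.sum + (q4ToP4 m x).2.2.sum = x.2.1.sum + x.2.2.sum := by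
  obtain ⟨v, hv⟩ := Nat.exists_eq_add_of_le' (two_le_card_beta hx)
  have := sum_crossSwapFst_add_sum_crossSwapSnd (alphaSeq_succ_le hx hv)
  have := two_le_fst hx
  rw [q4ToP4_eq m hv, sum_alpha hx hv, sum_beta hx hv]
  simp only [Multiset.sum_cons, ← Finset.range_val, ← Finset.sum_eq_multiset_sum,
    Finset.sum_add_distrib, Finset.sum_const, Finset.card_range, smul_eq_mul, mul_one]
  omega

theorem le_of_mem_q4ToP4_gamma (hx : x ∈ Q4 m n) : ∀ y ∈ (q4ToP4 m x).2.1, y ≤ m + x.1 - 1 := by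
  simp only [q4ToP4, Multiset.mem_cons, Multiset.mem_map]
  rintro _ (rfl | ⟨i, -, rfl⟩)
  · rfl
  · have := crossSwapFst_le (a := alphaSeq x) (e := betaSeq x) (c := m + x.1 - 2)
      (fun i hi => by have := alphaSeq_le hx hi; have := two_le_fst hx; omega)
      (fun i => by have := betaSeq_le hx (i := i); omega) (Nat.le_add_left 1 i)
    have := two_le_fst hx
    omega

theorem le_of_mem_q4ToP4_delta (hx : x ∈ Q4 m n) : ∀ y ∈ (q4ToP4 m x).2.2, y ≤ x.1 := by
  obtain ⟨v, hv⟩ := Nat.exists_eq_add_of_le' (two_le_card_beta hx)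
  simp only [q4ToP4_eq m hv, Multiset.mem_cons, Multiset.mem_map]
  rintro _ (rfl | rfl | ⟨i, -, rfl⟩)
  · rfl
  · exact two_le_fst hx
  · have := crossSwapSnd_le (a := alphaSeq x) (e := betaSeq x) (i := i + 1)
      (antitone_alphaSeq x) (fun _ => betaSeq_le hx) (alphaSeq_succ_le hx hv)
    have := two_le_fst hx
    omega

theorem mapsTo_q4ToP4 : Set.MapsTo (q4ToP4 m) (Q4 m n) (P4 m n) := by
  intro x hx
  obtain ⟨v, hv⟩ := Nat.exists_eq_add_of_le' (two_le_card_beta hx)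
  have hj := two_le_fst hx
  have hγ := le_of_mem_q4ToP4_gamma hx
  have hδ := le_of_mem_q4ToP4_delta hx
  have hsum := sum_q4ToP4 hx
  obtain ⟨-, -, -, -, -, hn, -⟩ := hx
  simp only [q4ToP4_eq m hv] at hγ hδ hsum
  simp only [q4ToP4_eq m hv, P4, Set.mem_ofPred_eq]
  refine ⟨by omega, ?_, ?_, fun y hy => (hγ y hy).trans (Nat.sub_le _ _), hδ, by omega,
    by simp, ?_, partAt_one_eq (by simp) hδ, by simp⟩
  · simp only [Multiset.mem_cons, Multiset.mem_map]
    rintro _ (rfl | ⟨i, -, rfl⟩) <;> omega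
  · simp only [Multiset.mem_cons, Multiset.mem_map]
    rintro _ (rfl | rfl | ⟨i, -, rfl⟩) <;> omega
  · rw [partAt_one_eq (by simp) hγ]
    omega

theorem card_beta_eq_of_q4ToP4_eq (hx : x ∈ Q4 m n) (hy : y ∈ Q4 m n)
    (h : q4ToP4 m x = q4ToP4 m y) : Multiset.card x.2.2 = Multiset.card y.2.2 := by
  have := congrArg (fun z => Multiset.card z.2.2) h
  simp only [q4ToP4, Multiset.card_cons, Multiset.card_map, Multiset.card_range] at this
  have := two_le_card_beta hx
  have := two_le_card_beta hy
  omega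

theorem eqOn_crossSwap_of_q4ToP4_eq (hx : x ∈ Q4 m n) (hy : y ∈ Q4 m n)
    (hv : Multiset.card x.2.2 = v + 2) (hv' : Multiset.card y.2.2 = v + 2)
    (h : q4ToP4 m x = q4ToP4 m y) :
    Set.EqOn (crossSwapFst (alphaSeq x) (betaSeq x)) (crossSwapFst (alphaSeq y) (betaSeq y))
        (Set.Icc 1 (v + 1)) ∧
      Set.EqOn (crossSwapSnd (alphaSeq x) (betaSeq x)) (crossSwapSnd (alphaSeq y) (betaSeq y))
        (Set.Iic v) := by
  have hj : x.1 = y.1 := (congrArg Prod.fst h :)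
  rw [q4ToP4_eq m hv, q4ToP4_eq m hv', hj] at h
  simp only [Prod.mk.injEq, Multiset.cons_inj_right, true_and] at h
  obtain ⟨hγ, hδ⟩ := h
  refine ⟨fun i ⟨h₁, h₂⟩ => ?_, fun i hi => ?_⟩
  · have := apply_eq_of_map_range_eq
      ((antitone_crossSwapFst_succ (antitone_alphaSeq x) (antitone_betaSeq x)).add_const 1)
      ((antitone_crossSwapFst_succ (antitone_alphaSeq y) (antitone_betaSeq y)).add_const 1)
      hγ (i := i - 1) (by omega)
    simpa [Nat.sub_add_cancel h₁] using this
  rcases Nat.eq_zero_or_pos i with rfl | h₁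
  · obtain ⟨-, -, -, -, -, -, hβ₁, -⟩ := hx
    obtain ⟨-, -, -, -, -, -, hβ₁', -⟩ := hy
    simp only [crossSwapSnd_zero, betaSeq, hβ₁, hβ₁', hj]
  · have := apply_eq_of_map_range_eq
      (((antitone_crossSwapSnd (antitone_alphaSeq x) (antitone_betaSeq x)
        (alphaSeq_succ_le hx hv)).comp_monotone add_left_mono).add_const 1)
      (((antitone_crossSwapSnd (antitone_alphaSeq y) (antitone_betaSeq y)
        (alphaSeq_succ_le hy hv')).comp_monotone add_left_mono).add_const 1)
      hδ (i := i - 1) (by rw [Set.mem_Iic] at hi; omega)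
    simpa [Nat.sub_add_cancel h₁] using this

theorem eq_of_eqOn_alphaSeq_betaSeq (hx : x ∈ Q4 m n) (hy : y ∈ Q4 m n)
    (hv : Multiset.card x.2.2 = v + 2) (hv' : Multiset.card y.2.2 = v + 2) (hj : x.1 = y.1)
    (hα : Set.EqOn (alphaSeq x) (alphaSeq y) (Set.Icc 1 v))
    (hβ : Set.EqOn (betaSeq x) (betaSeq y) (Set.Icc 1 (v + 1))) : x = y := by
  obtain ⟨-, hαpos, hβpos, -, -, -, hβ₁, hcard, hα₁, -, -⟩ := id hx
  obtain ⟨-, hαpos', hβpos', -, -, -, hβ₁', hcard', hα₁', -, -⟩ := id hy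
  refine Prod.ext hj (Prod.ext ?_ ?_)
  · refine eq_of_partAt_eq_of_card_le hαpos hαpos' (k := v + 1) (by omega) (by omega)
      fun i hi => ?_
    rcases Nat.eq_zero_or_pos i with rfl | h₁
    · rw [hα₁, hα₁', hj]
    · exact hα ⟨h₁, by omega⟩
  · refine eq_of_partAt_eq_of_card_le hβpos hβpos' hv.le hv'.le fun i hi => ?_
    rcases Nat.eq_zero_or_pos i with rfl | h₁
    · rw [hβ₁, hβ₁', hj]
    · rw [← betaSeq_add_two hx (by omega), ← betaSeq_add_two hy (by omega), hβ ⟨h₁, by omega⟩]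

theorem injOn_q4ToP4 : Set.InjOn (q4ToP4 m) (Q4 m n) := by
  intro x hx y hy h
  obtain ⟨v, hv⟩ := Nat.exists_eq_add_of_le' (two_le_card_beta hx)
  have hv' : Multiset.card y.2.2 = v + 2 := card_beta_eq_of_q4ToP4_eq hx hy h ▸ hv
  obtain ⟨hfst, hsnd⟩ := eqOn_crossSwap_of_q4ToP4_eq hx hy hv hv' h
  obtain ⟨hα, hβ⟩ := eqOn_of_crossSwap_eqOn (antitone_betaSeq x) (antitone_betaSeq y)
    (alphaSeq_succ_le hx hv) (alphaSeq_succ_le hy hv') hfst hsnd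
  exact eq_of_eqOn_alphaSeq_betaSeq hx hy hv hv' (congrArg Prod.fst h :) hα hβ

end Q4

theorem finite_setOf_sum_le (N : ℕ) :
    {μ : Multiset ℕ | μ.sum ≤ N ∧ ∀ y ∈ μ, 0 < y}.Finite := by
  refine ((Finset.range (N + 1)).finite_toSet.biUnion fun k _ =>
    Set.finite_range (Nat.Partition.parts : Nat.Partition k → Multiset ℕ)).subset ?_
  rintro μ ⟨hsum, hpos⟩
  exact Set.mem_biUnion (x := μ.sum) (by simp only [Finset.coe_range, Set.mem_Iio]; omega)
    ⟨⟨μ, hpos _, rfl⟩, rfl⟩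

theorem finite_P4 (m n : ℕ) : (P4 m n).Finite := by
  refine ((Set.finite_Iic n).prod ((finite_setOf_sum_le n).prod (finite_setOf_sum_le n))).subset ?_
  rintro ⟨j, γ, δ⟩ ⟨hj, hγ, hδ, -, -, hn : γ.sum + δ.sum + j * (m + j) = n, -⟩
  have : j ≤ j * (m + j) := Nat.le_mul_of_pos_right j (by omega)
  exact ⟨show j ≤ n by omega, ⟨show γ.sum ≤ n by omega, hγ⟩, ⟨show δ.sum ≤ n by omega, hδ⟩⟩

/-- For all integers m ≥ 0 and n ≥ 0, #Q₄(m,n) ≤ #P₄(-m,n). -/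
theorem Q4_card_le_P4_card (m n : ℕ) : Nat.card (Q4 m n) ≤ Nat.card (P4 m n) := by
  rw [Nat.card_coe_set_eq, Nat.card_coe_set_eq]
  exact Set.ncard_le_ncard_of_injOn _ Q4.mapsTo_q4ToP4 Q4.injOn_q4ToP4 (finite_P4 m n)
end
end
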